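/- arXiv:2110.13789 — 10 statements merged into one kernel-verified Lean document; each statement's English description precedes it below -/
import Mathlib

section
/- For every integer n ≥ 1 and all reals k₁ < k₂ < k₃, the Y soliton parameters satisfy the modified Rankine–Hugoniot jump condition for the n-th modulation conservation law: h(a₂,q₂) − h(a₁,q₁) − h(a₃,q₃) = (2/3)(k₁+k₂+k₃) · ( f(a₂,q₂) − f(a₁,q₁) − f(a₃,q₃) ). -/
/-- Coefficients `c_i` of the `n`-th modulation conservation-law density:
`c_i = (3i/((n−i)(2n)(2n−1)))·C(2n,2i+1)` for `i = 1,…,n−1` and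
`c_n = 3/((2n+1)(2n−1))`. -/
noncomputable def cCoef (n i : ℕ) : ℝ :=
  if i = n then 3 / ((2 * (n : ℝ) + 1) * (2 * (n : ℝ) - 1))
  else (3 * (i : ℝ) / (((n : ℝ) - (i : ℝ)) * (2 * (n : ℝ)) * (2 * (n : ℝ) - 1))) *
    (Nat.choose (2 * n) (2 * i + 1) : ℝ)

/-- Coefficients `d_i = (2 − 4(i−1)/(3(2i−2n−1)))·c_i` of the `n`-th flux. -/
noncomputable def dCoef (n i : ℕ) : ℝ :=
  (2 - 4 * ((i : ℝ) - 1) / (3 * (2 * (i : ℝ) - 2 * (n : ℝ) - 1))) * cCoef n i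

/-- The density `f(a,q) = Σ_{i=1}^n c_i a^{i+1/2} q^{2(n−i)}`. -/
noncomputable def fDen (n : ℕ) (a q : ℝ) : ℝ :=
  ∑ i ∈ Finset.Icc 1 n, cCoef n i * (a ^ i * Real.sqrt a) * q ^ (2 * (n - i))

/-- The flux `h(a,q) = Σ_{i=1}^n d_i a^{i+1/2} q^{2(n−i)+1}`. -/
noncomputable def hFlux (n : ℕ) (a q : ℝ) : ℝ :=
  ∑ i ∈ Finset.Icc 1 n, dCoef n i * (a ^ i * Real.sqrt a) * q ^ (2 * (n - i) + 1)

/-!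
Write `a = u²` with `u ≥ 0` and `q = v`. The `i`-th terms of `f` and `h` are then multiples of
`u^(2i+1)`, i.e. of odd-index terms in the binomial expansions of `(v ± u)^m`, and the coefficients
`c_i`, `d_i` are exactly those making `f` and `h` linear combinations of `(v + u)^m - (v - u)^m`,
`v ((v + u)^m - (v - u)^m)` and `v² ((v + u)^m - (v - u)^m)` for `m = 2n, 2n+1, 2n+2`. On each leg
of the Y soliton `v ± u` are two of the `kⱼ`, so the pure differences `kⱼ^m - kᵢ^m` cancel in the
jump, and what is left is a polynomial identity in the `kⱼ` and `kⱼ^(2n)`.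
-/

open Finset

theorem Finset.sum_range_two_mul {M : Type*} [AddCommMonoid M] (f : ℕ → M) (N : ℕ) :
    ∑ k ∈ range (2 * N), f k = ∑ i ∈ range N, (f (2 * i) + f (2 * i + 1)) := by
  induction N with
  | zero => simp
  | succ N ih => rw [Nat.mul_succ, sum_range_succ, sum_range_succ, sum_range_succ, ih, add_assoc]

theorem add_pow_sub_sub_pow_eq_sum {R : Type*} [CommRing R] (u v : R) {m N : ℕ} (hm : m ≤ 2 * N) :
    (v + u) ^ m - (v - u) ^ m
      = ∑ i ∈ range N,
          2 * (m.choose (2 * i + 1) : R) * u ^ (2 * i + 1) * v ^ (m - (2 * i + 1)) := by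
  have hsum : (v + u) ^ m - (v - u) ^ m
      = ∑ k ∈ range (2 * N + 1), (u ^ k - (-u) ^ k) * v ^ (m - k) * (m.choose k : R) := by
    rw [add_comm v u, sub_eq_add_neg v u, add_comm v (-u), add_pow, add_pow,
      ← sum_sub_distrib]
    refine sum_subset (range_subset_range.2 (by omega)) (fun k _ hk => ?_) |>.trans
      (sum_congr rfl fun k _ => by ring)
    rw [Nat.choose_eq_zero_of_lt (by simpa using hk)]
    simp
  rw [hsum, sum_range_succ, sum_range_two_mul, (even_two_mul N).neg_pow, sub_self, zero_mul,
    zero_mul, add_zero]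
  refine sum_congr rfl fun i _ => ?_
  rw [(even_two_mul i).neg_pow, (odd_two_mul_add_one i).neg_pow]
  ring

theorem Nat.cast_choose_succ_mul {R : Type*} [CommRing R] {m k : ℕ} (hk : k ≤ m + 1) :
    ((m + 1).choose k : R) * ((m : R) + 1 - k) = m.choose k * (m + 1) := by
  have h := congrArg (Nat.cast (R := R)) (Nat.choose_mul_succ_eq m k)
  push_cast [Nat.cast_sub hk] at h
  exact h.symm

theorem Nat.cast_choose_mul_pow_sub {R : Type*} [CommSemiring R] (v : R) (m k j : ℕ) :
    (m.choose k : R) * v ^ j * v ^ (m - k) = m.choose k * v ^ (m + j - k) := by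
  rcases le_or_gt k m with hk | hk
  · rw [mul_assoc, ← pow_add, show j + (m - k) = m + j - k by omega]
  · simp [Nat.choose_eq_zero_of_lt hk]

theorem Finset.sum_Icc_one_eq_sum_range_succ {M : Type*} [AddCommMonoid M] {f : ℕ → M}
    (h0 : f 0 = 0) (n : ℕ) : ∑ i ∈ Icc 1 n, f i = ∑ i ∈ range (n + 1), f i := by
  rw [range_eq_Ico, ← insert_Ico_add_one_left_eq_Ico (by omega), sum_insert (by simp), h0,
    zero_add]
  rfl

theorem sq_pow_mul_sqrt_sq {u : ℝ} (hu : 0 ≤ u) (i : ℕ) :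
    (u ^ 2) ^ i * Real.sqrt (u ^ 2) = u ^ (2 * i + 1) := by
  rw [Real.sqrt_sq hu, ← pow_mul, pow_succ, mul_comm 2 i]

theorem cCoef_zero {n : ℕ} (hn : 1 ≤ n) : cCoef n 0 = 0 := by
  rw [cCoef, if_neg (by omega)]
  simp

theorem dCoef_zero {n : ℕ} (hn : 1 ≤ n) : dCoef n 0 = 0 := by
  rw [dCoef, cCoef_zero hn, mul_zero]

theorem cCoef_eq_choose {n i : ℕ} (hn : 1 ≤ n) (hi : i ≤ n) :
    cCoef n i = 3 / (2 * (2 * n + 1) * (2 * n - 1)) * (2 * (2 * n + 1).choose (2 * i + 1) : ℝ)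
      - 3 / (4 * n * (2 * n - 1)) * (2 * (2 * n).choose (2 * i + 1) : ℝ) := by
  have hN : (1 : ℝ) ≤ n := by exact_mod_cast hn
  have : (2 * n - 1 : ℝ) ≠ 0 := by linarith
  have : (2 * n + 1 : ℝ) ≠ 0 := by linarith
  rcases hi.eq_or_lt with rfl | hi
  · simp [cCoef]
    field_simp
  have hI : (i : ℝ) < n := by exact_mod_cast hi
  have : (n : ℝ) - i ≠ 0 := by linarith
  have hpascal := Nat.cast_choose_succ_mul (R := ℝ) (m := 2 * n) (k := 2 * i + 1) (by omega)
  push_cast at hpascal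
  rw [cCoef, if_neg hi.ne]
  field_simp
  linear_combination (-4 * n / (2 * n - 1) : ℝ) * hpascal

theorem dCoef_eq_choose {n i : ℕ} (hn : 1 ≤ n) (hi : i ≤ n) :
    dCoef n i = 1 / (4 * n * (n + 1)) * (2 * (2 * n + 2).choose (2 * i + 1) : ℝ)
      + 1 / (2 * n * (2 * n - 1)) * (2 * (2 * n + 1).choose (2 * i + 1) : ℝ)
      - 1 / (n * (2 * n - 1)) * (2 * (2 * n).choose (2 * i + 1) : ℝ) := by
  have hN : (1 : ℝ) ≤ n := by exact_mod_cast hn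
  have hI : (i : ℝ) ≤ n := by exact_mod_cast hi
  have hgap : (2 * n + 1 - 2 * i : ℝ) ≠ 0 := by linarith
  have : (2 * n - 1 : ℝ) ≠ 0 := by linarith
  have hpascal₁ := Nat.cast_choose_succ_mul (R := ℝ) (m := 2 * n) (k := 2 * i + 1) (by omega)
  have hpascal₂ := Nat.cast_choose_succ_mul (R := ℝ) (m := 2 * n + 1) (k := 2 * i + 1) (by omega)
  push_cast at hpascal₁ hpascal₂
  have hC₀ : ((2 * n).choose (2 * i + 1) : ℝ)
      = (2 * n + 1).choose (2 * i + 1) * (2 * n - 2 * i) / (2 * n + 1) := by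
    rw [eq_div_iff (by linarith)]
    linear_combination -hpascal₁
  have hC₂ : ((2 * n + 2).choose (2 * i + 1) : ℝ)
      = (2 * n + 1).choose (2 * i + 1) * (2 * n + 2) / (2 * n + 1 - 2 * i) := by
    rw [eq_div_iff hgap]
    linear_combination hpascal₂
  rw [dCoef, cCoef_eq_choose hn hi, hC₀, hC₂,
    show (2 * i - 2 * n - 1 : ℝ) = -(2 * n + 1 - 2 * i) by ring]
  field_simp
  ring

theorem fDen_sq {n : ℕ} (hn : 1 ≤ n) {u : ℝ} (hu : 0 ≤ u) (v : ℝ) :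
    fDen n (u ^ 2) v
      = 3 / (2 * (2 * n + 1) * (2 * n - 1)) * ((v + u) ^ (2 * n + 1) - (v - u) ^ (2 * n + 1))
        - 3 / (4 * n * (2 * n - 1)) * (v * ((v + u) ^ (2 * n) - (v - u) ^ (2 * n))) := by
  rw [fDen, sum_Icc_one_eq_sum_range_succ (by simp [cCoef_zero hn])]
  rw [add_pow_sub_sub_pow_eq_sum u v (N := n + 1) (by omega),
    add_pow_sub_sub_pow_eq_sum u v (N := n + 1) (by omega), mul_sum, mul_sum, mul_sum,
    ← sum_sub_distrib]
  refine sum_congr rfl fun i hi => ?_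
  have hi : i ≤ n := Nat.lt_succ_iff.mp (mem_range.mp hi)
  have hpow := Nat.cast_choose_mul_pow_sub v (2 * n) (2 * i + 1) 1
  rw [pow_one] at hpow
  rw [sq_pow_mul_sqrt_sq hu, cCoef_eq_choose hn hi,
    show 2 * (n - i) = 2 * n + 1 - (2 * i + 1) by omega]
  linear_combination (3 / (4 * n * (2 * n - 1)) * 2 * u ^ (2 * i + 1) : ℝ) * hpow

theorem hFlux_sq {n : ℕ} (hn : 1 ≤ n) {u : ℝ} (hu : 0 ≤ u) (v : ℝ) :
    hFlux n (u ^ 2) v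
      = 1 / (4 * n * (n + 1)) * ((v + u) ^ (2 * n + 2) - (v - u) ^ (2 * n + 2))
        + 1 / (2 * n * (2 * n - 1)) * (v * ((v + u) ^ (2 * n + 1) - (v - u) ^ (2 * n + 1)))
        - 1 / (n * (2 * n - 1)) * (v ^ 2 * ((v + u) ^ (2 * n) - (v - u) ^ (2 * n))) := by
  rw [hFlux, sum_Icc_one_eq_sum_range_succ (by simp [dCoef_zero hn])]
  rw [add_pow_sub_sub_pow_eq_sum u v (N := n + 1) (by omega),
    add_pow_sub_sub_pow_eq_sum u v (N := n + 1) (by omega),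
    add_pow_sub_sub_pow_eq_sum u v (N := n + 1) (by omega), mul_sum, mul_sum, mul_sum, mul_sum,
    mul_sum, ← sum_add_distrib, ← sum_sub_distrib]
  refine sum_congr rfl fun i hi => ?_
  have hi : i ≤ n := Nat.lt_succ_iff.mp (mem_range.mp hi)
  have hpow₁ := Nat.cast_choose_mul_pow_sub v (2 * n + 1) (2 * i + 1) 1
  have hpow₂ := Nat.cast_choose_mul_pow_sub v (2 * n) (2 * i + 1) 2
  rw [pow_one, show 2 * n + 1 + 1 = 2 * n + 2 from rfl] at hpow₁
  rw [sq_pow_mul_sqrt_sq hu, dCoef_eq_choose hn hi,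
    show 2 * (n - i) + 1 = 2 * n + 2 - (2 * i + 1) by omega]
  linear_combination (-(1 / (2 * n * (2 * n - 1))) * 2 * u ^ (2 * i + 1) : ℝ) * hpow₁
    + (1 / (n * (2 * n - 1)) * 2 * u ^ (2 * i + 1) : ℝ) * hpow₂

theorem fDen_leg {n : ℕ} (hn : 1 ≤ n) {x y : ℝ} (hxy : x ≤ y) :
    fDen n ((y - x) ^ 2 / 4) ((x + y) / 2)
      = 3 / (2 * (2 * n + 1) * (2 * n - 1)) * (y ^ (2 * n + 1) - x ^ (2 * n + 1))
        - 3 / (4 * n * (2 * n - 1)) * ((x + y) / 2 * (y ^ (2 * n) - x ^ (2 * n))) := by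
  rw [show (y - x) ^ 2 / 4 = ((y - x) / 2) ^ 2 by ring, fDen_sq hn (by linarith),
    show (x + y) / 2 + (y - x) / 2 = y by ring, show (x + y) / 2 - (y - x) / 2 = x by ring]

theorem hFlux_leg {n : ℕ} (hn : 1 ≤ n) {x y : ℝ} (hxy : x ≤ y) :
    hFlux n ((y - x) ^ 2 / 4) ((x + y) / 2)
      = 1 / (4 * n * (n + 1)) * (y ^ (2 * n + 2) - x ^ (2 * n + 2))
        + 1 / (2 * n * (2 * n - 1)) * ((x + y) / 2 * (y ^ (2 * n + 1) - x ^ (2 * n + 1)))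
        - 1 / (n * (2 * n - 1)) * (((x + y) / 2) ^ 2 * (y ^ (2 * n) - x ^ (2 * n))) := by
  rw [show (y - x) ^ 2 / 4 = ((y - x) / 2) ^ 2 by ring, hFlux_sq hn (by linarith),
    show (x + y) / 2 + (y - x) / 2 = y by ring, show (x + y) / 2 - (y - x) / 2 = x by ring]

/-- For every `n ≥ 1` and all `k₁ < k₂ < k₃`, the Y soliton parameters
`qⱼ, aⱼ` satisfy the modified Rankine–Hugoniot jump condition
`h(a₂,q₂) − h(a₁,q₁) − h(a₃,q₃) = s_y (f(a₂,q₂) − f(a₁,q₁) − f(a₃,q₃))`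
with `s_y = (2/3)(k₁+k₂+k₃)`. -/
theorem y_soliton_modified_RH_first_family (n : ℕ) (hn : 1 ≤ n)
    (k₁ k₂ k₃ : ℝ) (h12 : k₁ < k₂) (h23 : k₂ < k₃) :
    hFlux n ((k₃ - k₁) ^ 2 / 4) ((k₁ + k₃) / 2)
      - hFlux n ((k₂ - k₁) ^ 2 / 4) ((k₁ + k₂) / 2)
      - hFlux n ((k₃ - k₂) ^ 2 / 4) ((k₂ + k₃) / 2)
    = (2 / 3) * (k₁ + k₂ + k₃) *
        (fDen n ((k₃ - k₁) ^ 2 / 4) ((k₁ + k₃) / 2)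
          - fDen n ((k₂ - k₁) ^ 2 / 4) ((k₁ + k₂) / 2)
          - fDen n ((k₃ - k₂) ^ 2 / 4) ((k₂ + k₃) / 2)) := by
  have h13 := h12.trans h23
  rw [hFlux_leg hn h13.le, hFlux_leg hn h12.le, hFlux_leg hn h23.le,
    fDen_leg hn h13.le, fDen_leg hn h12.le, fDen_leg hn h23.le]
  have hN : (1 : ℝ) ≤ n := by exact_mod_cast hn
  have : (n : ℝ) ≠ 0 := by linarith
  have : (2 * n - 1 : ℝ) ≠ 0 := by linarith
  field_simp
  ring
end

section
/- For every integer n ≥ 1, the density f and flux h satisfy the conservation-law compatibility conditions for the KP soliton modulation system: for all a > 0 and all q ∈ ℝ, ∂h/∂a = 2q ∂f/∂a + (1/3) ∂f/∂q and ∂h/∂q = (4/3)a ∂f/∂a + 2q ∂f/∂q. Consequently, if a(y,t) > 0 and q(y,t) are differentiable solutions of the modulation system, then ∂_t f(a,q) + ∂_y h(a,q) = 0. -/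
/-!
Both compatibility conditions compare coefficients of matching monomials. The `q`-condition,
read off at `a^{i+1/2} q^{2(n-i)}`, is a rearrangement of the definition of `d_i`. The
`a`-condition, read off at `a^{i-1/2} q^{2(n-i)+1}` after shifting the index of `f_q` by one,
reduces to the recurrence `(i-1)(2i+1) c_i = (n-i+1)(2n-2i+1) c_{i-1}`, i.e. to the ratio of the
binomial coefficients `C(2n, 2i+1)` and `C(2n, 2i-1)`. The conservation law then follows from the
chain rule: `f_t + h_y = f_a (a_t + 2q a_y + (4/3) a q_y) + f_q (q_t + (1/3) a_y + 2q q_y)`.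
-/

open Finset

lemma cast_choose_add_two_mul {m k : ℕ} (h : k + 1 ≤ m) :
    (m.choose (k + 2) : ℝ) * ((k + 2) * (k + 1))
      = m.choose k * (((m : ℝ) - k) * ((m : ℝ) - k - 1)) := by
  have hA : (m.choose (k + 2) : ℝ) * (k + 2) = m.choose (k + 1) * ((m : ℝ) - k - 1) := by
    have := congrArg (Nat.cast : ℕ → ℝ) (Nat.choose_succ_right_eq m (k + 1))
    push_cast [Nat.cast_sub h] at this
    linear_combination this
  have hB : (m.choose (k + 1) : ℝ) * (k + 1) = m.choose k * ((m : ℝ) - k) := by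
    have := congrArg (Nat.cast : ℕ → ℝ) (Nat.choose_succ_right_eq m k)
    push_cast [Nat.cast_sub (by omega : k ≤ m)] at this
    linear_combination this
  linear_combination ((k : ℝ) + 1) * hA + ((m : ℝ) - k - 1) * hB

lemma natCast_mul_cCoef_zero (n : ℕ) : (n : ℝ) * cCoef n 0 = 0 := by
  rcases n.eq_zero_or_pos with rfl | hn
  · simp
  · simp [cCoef, hn.ne]

lemma cCoef_succ_recurrence {n j : ℕ} (h : j + 1 ≤ n) :
    (j : ℝ) * (2 * j + 3) * cCoef n (j + 1)
      = ((n : ℝ) - j) * (2 * ((n : ℝ) - j) - 1) * cCoef n j := by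
  rcases h.eq_or_lt with rfl | hlt
  · have hchoose : ((2 * (j + 1)).choose (2 * j + 1) : ℝ) = 2 * (j + 1) := by
      rw [show 2 * (j + 1) = (2 * j + 1) + 1 by ring, Nat.choose_succ_self_right]
      push_cast; ring
    rw [cCoef, if_pos rfl, cCoef, if_neg (by omega), hchoose]
    push_cast
    field_simp
    ring
  · have hlt' : (j : ℝ) + 1 < n := by exact_mod_cast hlt
    have hbinom := cast_choose_add_two_mul (m := 2 * n) (k := 2 * j + 1) (by omega)
    rw [show 2 * j + 1 + 2 = 2 * (j + 1) + 1 by ring] at hbinom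
    rw [cCoef, if_neg (by omega), cCoef, if_neg (by omega)]
    push_cast at hbinom ⊢
    have h1 : (n : ℝ) - (j + 1) ≠ 0 := by linarith
    have h2 : (n : ℝ) - j ≠ 0 := by linarith
    have h3 : 2 * (n : ℝ) - 1 ≠ 0 := by linarith
    have h4 : (n : ℝ) ≠ 0 := by linarith
    field_simp
    linear_combination (j / 2 : ℝ) * hbinom

lemma dCoef_eq (n i : ℕ) :
    dCoef n i = (2 + 4 * ((i : ℝ) - 1) / (3 * (2 * ((n : ℝ) - i) + 1))) * cCoef n i := by
  rw [dCoef, show 3 * (2 * (i : ℝ) - 2 * n - 1) = -(3 * (2 * ((n : ℝ) - i) + 1)) by ring,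
    div_neg, sub_neg_eq_add]

lemma dCoef_mul_two_mul_sub_add_one {n i : ℕ} (h : i ≤ n) :
    dCoef n i * (2 * ((n : ℝ) - i) + 1)
      = (4 / 3) * ((i : ℝ) + 1 / 2) * cCoef n i + 4 * ((n : ℝ) - i) * cCoef n i := by
  have hin : (i : ℝ) ≤ n := by exact_mod_cast h
  have hden : 2 * ((n : ℝ) - i) + 1 ≠ 0 := by linarith
  rw [dCoef_eq]
  field_simp
  ring

lemma dCoef_succ_mul {n j : ℕ} (h : j + 1 ≤ n) :
    dCoef n (j + 1) * ((j : ℝ) + 3 / 2)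
      = 2 * cCoef n (j + 1) * ((j : ℝ) + 3 / 2) + (2 / 3) * ((n : ℝ) - j) * cCoef n j := by
  have hjn : (j : ℝ) + 1 ≤ n := by exact_mod_cast h
  have hden : 2 * ((n : ℝ) - (j + 1)) + 1 ≠ 0 := by linarith
  rw [dCoef_eq]
  push_cast
  field_simp
  linear_combination (4 : ℝ) * cCoef_succ_recurrence h

lemma mul_natCast_mul_pow_sub_one {R : Type*} [CommSemiring R] (x : R) (k : ℕ) :
    x * (k * x ^ (k - 1)) = k * x ^ k := by
  cases k with
  | zero => simp
  | succ k => rw [Nat.add_sub_cancel, pow_succ]; ring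

lemma sum_Icc_one_eq_sum_range {M : Type*} [AddCommMonoid M] (n : ℕ) (g : ℕ → M) :
    ∑ i ∈ Icc 1 n, g i = ∑ j ∈ range n, g (j + 1) := by
  rw [range_eq_Ico, sum_Ico_add', Ico_add_one_right_eq_Icc, zero_add]

noncomputable def halfIntPowSum (n : ℕ) (w : ℕ → ℝ) (e : ℕ → ℕ) (a q : ℝ) : ℝ :=
  ∑ i ∈ Icc 1 n, w i * (a ^ i * √a) * q ^ e i

noncomputable def halfIntPowSumDerivA (n : ℕ) (w : ℕ → ℝ) (e : ℕ → ℕ) (a q : ℝ) : ℝ :=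
  ∑ i ∈ Icc 1 n, w i * (((i : ℝ) + 1 / 2) * (a ^ (i - 1) * √a)) * q ^ e i

noncomputable def halfIntPowSumDerivQ (n : ℕ) (w : ℕ → ℝ) (e : ℕ → ℕ) (a q : ℝ) : ℝ :=
  ∑ i ∈ Icc 1 n, w i * (a ^ i * √a) * (e i * q ^ (e i - 1))

lemma hasDerivAt_pow_mul_sqrt {i : ℕ} (hi : 1 ≤ i) {x : ℝ} (hx : 0 < x) :
    HasDerivAt (fun a => a ^ i * √a) (((i : ℝ) + 1 / 2) * (x ^ (i - 1) * √x)) x := by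
  refine ((hasDerivAt_pow i x).mul (Real.hasDerivAt_sqrt hx.ne')).congr_deriv ?_
  rw [← pow_sub_one_mul (by omega : i ≠ 0) x]
  field_simp
  rw [Real.sq_sqrt hx.le]
  ring

section

variable {n : ℕ} {w : ℕ → ℝ} {e : ℕ → ℕ}

theorem HasDerivAt.halfIntPowSum {p r : ℝ → ℝ} {p' r' t : ℝ} (hp : HasDerivAt p p' t)
    (hr : HasDerivAt r r' t) (hpos : 0 < p t) :
    HasDerivAt (fun s => halfIntPowSum n w e (p s) (r s))
      (halfIntPowSumDerivA n w e (p t) (r t) * p'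
        + halfIntPowSumDerivQ n w e (p t) (r t) * r') t := by
  rw [halfIntPowSumDerivA, halfIntPowSumDerivQ, sum_mul, sum_mul, ← sum_add_distrib]
  refine HasDerivAt.fun_sum fun i hi => ?_
  have hpow := (hasDerivAt_pow_mul_sqrt (mem_Icc.1 hi).1 hpos).comp t hp
  have hq := (hasDerivAt_pow (e i) (r t)).comp t hr
  refine ((hpow.const_mul (w i)).mul hq).congr_deriv ?_
  simp only [Function.comp_apply]
  ring

lemma deriv_halfIntPowSum_fst {a : ℝ} (q : ℝ) (ha : 0 < a) :
    deriv (fun a' => halfIntPowSum n w e a' q) a = halfIntPowSumDerivA n w e a q := by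
  simpa using ((hasDerivAt_id a).halfIntPowSum (hasDerivAt_const a q) ha).deriv

lemma deriv_halfIntPowSum_snd {a : ℝ} (q : ℝ) (ha : 0 < a) :
    deriv (fun q' => halfIntPowSum n w e a q') q = halfIntPowSumDerivQ n w e a q := by
  simpa using ((hasDerivAt_const q a).halfIntPowSum (hasDerivAt_id q) ha).deriv

end

lemma hFlux_derivQ_eq (n : ℕ) (a q : ℝ) :
    halfIntPowSumDerivQ n (dCoef n) (fun i => 2 * (n - i) + 1) a q
      = (4 / 3) * a * halfIntPowSumDerivA n (cCoef n) (fun i => 2 * (n - i)) a q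
        + 2 * q * halfIntPowSumDerivQ n (cCoef n) (fun i => 2 * (n - i)) a q := by
  rw [halfIntPowSumDerivQ, halfIntPowSumDerivA, halfIntPowSumDerivQ, mul_sum, mul_sum,
    ← sum_add_distrib]
  refine sum_congr rfl fun i hi => ?_
  obtain ⟨hi1, hin⟩ := mem_Icc.1 hi
  have hcast : ((2 * (n - i) : ℕ) : ℝ) = 2 * ((n : ℝ) - i) := by
    push_cast [Nat.cast_sub hin]; ring
  have hq := mul_natCast_mul_pow_sub_one q (2 * (n - i))
  have ha := mul_pow_sub_one (by omega : i ≠ 0) a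
  rw [hcast] at hq
  push_cast [Nat.add_sub_cancel, hcast]
  linear_combination (a ^ i * √a * q ^ (2 * (n - i))) * dCoef_mul_two_mul_sub_add_one hin
    - (4 / 3 * cCoef n i * (i + 1 / 2) * √a * q ^ (2 * (n - i))) * ha
    - 2 * cCoef n i * a ^ i * √a * hq

lemma hFlux_derivA_eq (n : ℕ) (a q : ℝ) :
    halfIntPowSumDerivA n (dCoef n) (fun i => 2 * (n - i) + 1) a q
      = 2 * q * halfIntPowSumDerivA n (cCoef n) (fun i => 2 * (n - i)) a q
        + (1 / 3) * halfIntPowSumDerivQ n (cCoef n) (fun i => 2 * (n - i)) a q := by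
  set φ : ℕ → ℝ := fun i =>
    cCoef n i * (a ^ i * √a) * ((2 * (n - i) : ℕ) * q ^ (2 * (n - i) - 1))
  have hshift : halfIntPowSumDerivQ n (cCoef n) (fun i => 2 * (n - i)) a q
      = ∑ j ∈ range n, φ j := by
    have htel := sum_range_sub φ n
    have hφ0 : φ 0 = 0 := by
      simp only [φ]
      push_cast
      linear_combination (2 * √a * q ^ (2 * n - 1)) * natCast_mul_cCoef_zero n
    have hφn : φ n = 0 := by simp [φ]
    rw [sum_sub_distrib, hφ0, hφn, sub_zero, sub_eq_zero] at htel
    rw [halfIntPowSumDerivQ, sum_Icc_one_eq_sum_range, htel]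
  rw [hshift, halfIntPowSumDerivA, halfIntPowSumDerivA, sum_Icc_one_eq_sum_range,
    sum_Icc_one_eq_sum_range, mul_sum, mul_sum, ← sum_add_distrib]
  refine sum_congr rfl fun j hj => ?_
  have hjn : j + 1 ≤ n := mem_range.1 hj
  have hexp : 2 * (n - j) - 1 = 2 * (n - (j + 1)) + 1 := by omega
  have hcast : ((2 * (n - j) : ℕ) : ℝ) = 2 * ((n : ℝ) - j) := by
    push_cast [Nat.cast_sub (by omega : j ≤ n)]; ring
  simp only [φ, hexp, hcast, Nat.add_sub_cancel, pow_succ]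
  push_cast
  linear_combination (a ^ j * √a * q ^ (2 * (n - (j + 1))) * q) * dCoef_succ_mul hjn

lemma fDen_eq (n : ℕ) : fDen n = halfIntPowSum n (cCoef n) (fun i => 2 * (n - i)) := rfl

lemma hFlux_eq (n : ℕ) : hFlux n = halfIntPowSum n (dCoef n) (fun i => 2 * (n - i) + 1) := rfl

theorem first_family_is_conservation_law_general (n : ℕ) :
    (∀ a q : ℝ, 0 < a →
      (deriv (fun a' => hFlux n a' q) a
          = 2 * q * deriv (fun a' => fDen n a' q) a
            + (1 / 3) * deriv (fun q' => fDen n a q') q)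
      ∧ (deriv (fun q' => hFlux n a q') q
          = (4 / 3) * a * deriv (fun a' => fDen n a' q) a
            + 2 * q * deriv (fun q' => fDen n a q') q))
    ∧ (∀ (a q aY aT qY qT : ℝ → ℝ → ℝ),
        (∀ y t, 0 < a y t) →
        (∀ y t, HasDerivAt (fun y' => a y' t) (aY y t) y) →
        (∀ y t, HasDerivAt (fun t' => a y t') (aT y t) t) →
        (∀ y t, HasDerivAt (fun y' => q y' t) (qY y t) y) →
        (∀ y t, HasDerivAt (fun t' => q y t') (qT y t) t) →
        (∀ y t, aT y t + 2 * q y t * aY y t + (4 / 3) * a y t * qY y t = 0) →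
        (∀ y t, qT y t + (1 / 3) * aY y t + 2 * q y t * qY y t = 0) →
        ∀ y t, deriv (fun t' => fDen n (a y t') (q y t')) t
              + deriv (fun y' => hFlux n (a y' t) (q y' t)) y = 0) := by
  rw [fDen_eq, hFlux_eq]
  refine ⟨fun a q ha => ?_, fun a q aY aT qY qT hpos haY haT hqY hqT hAmp hSlope y t => ?_⟩
  · rw [deriv_halfIntPowSum_fst q ha, deriv_halfIntPowSum_snd q ha, deriv_halfIntPowSum_fst q ha,
      deriv_halfIntPowSum_snd q ha]
    exact ⟨hFlux_derivA_eq n a q, hFlux_derivQ_eq n a q⟩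
  · rw [((haT y t).halfIntPowSum (hqT y t) (hpos y t)).deriv,
      ((haY y t).halfIntPowSum (hqY y t) (hpos y t)).deriv, hFlux_derivA_eq, hFlux_derivQ_eq]
    linear_combination
      halfIntPowSumDerivA n (cCoef n) (fun i => 2 * (n - i)) (a y t) (q y t) * hAmp y t
        + halfIntPowSumDerivQ n (cCoef n) (fun i => 2 * (n - i)) (a y t) (q y t) * hSlope y t

/-- For every `n ≥ 1`, the density `f` and flux `h` satisfy the compatibility
conditions `h_a = 2q f_a + (1/3) f_q` and `h_q = (4/3)a f_a + 2q f_q` for all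
`a > 0`, `q ∈ ℝ`; consequently, for any differentiable solution `(a,q)` of the
KP soliton modulation system with `a > 0`, `∂_t f(a,q) + ∂_y h(a,q) = 0`. -/
theorem first_family_is_conservation_law (n : ℕ) (hn : 1 ≤ n) :
    (∀ a q : ℝ, 0 < a →
      (deriv (fun a' => hFlux n a' q) a
          = 2 * q * deriv (fun a' => fDen n a' q) a
            + (1 / 3) * deriv (fun q' => fDen n a q') q)
      ∧ (deriv (fun q' => hFlux n a q') q
          = (4 / 3) * a * deriv (fun a' => fDen n a' q) a
            + 2 * q * deriv (fun q' => fDen n a q') q))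
    ∧ (∀ (a q aY aT qY qT : ℝ → ℝ → ℝ),
        (∀ y t, 0 < a y t) →
        (∀ y t, HasDerivAt (fun y' => a y' t) (aY y t) y) →
        (∀ y t, HasDerivAt (fun t' => a y t') (aT y t) t) →
        (∀ y t, HasDerivAt (fun y' => q y' t) (qY y t) y) →
        (∀ y t, HasDerivAt (fun t' => q y t') (qT y t) t) →
        (∀ y t, aT y t + 2 * q y t * aY y t + (4 / 3) * a y t * qY y t = 0) →
        (∀ y t, qT y t + (1 / 3) * aY y t + 2 * q y t * qY y t = 0) →
        ∀ y t, deriv (fun t' => fDen n (a y t') (q y t')) t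
              + deriv (fun y' => hFlux n (a y' t) (q y' t)) y = 0) :=
  first_family_is_conservation_law_general n
end

section
/- For all reals k₁ < k₂ < k₃ and any two distinct indices i, j ∈ {1,2,3}, the Y soliton parameters satisfy the ordinary Rankine–Hugoniot jump condition for the conservation of waves equation q_t + (a/3 + q²)_y = 0 with the vertex velocity s_y: s_y (q_i − q_j) = (a_i/3 + q_i²) − (a_j/3 + q_j²). -/
/-! Each leg of the Y soliton, with phases `kₐ < k_b` and third phase `k_c`, satisfies
`s_y q - (a/3 + q²) = (kₐk_b + kₐk_c + k_bk_c)/3 = -s_x`, a value symmetric in the three phases and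
hence the same for all legs. Subtracting this identity for two legs gives the jump condition. -/

theorem ySoliton_leg_vertexVelocity_mul_sub_flux (a b c : ℝ) :
    (2 / 3) * (a + b + c) * ((a + b) / 2) - ((b - a) ^ 2 / 4 / 3 + ((a + b) / 2) ^ 2)
      = (a * b + a * c + b * c) / 3 := by
  ring

theorem y_soliton_conservation_of_waves_jump_general (k₁ k₂ k₃ : ℝ)
    (qv av : Fin 3 → ℝ)
    (hqv : qv = ![(k₁ + k₂) / 2, (k₁ + k₃) / 2, (k₂ + k₃) / 2])
    (hav : av = ![(k₂ - k₁) ^ 2 / 4, (k₃ - k₁) ^ 2 / 4, (k₃ - k₂) ^ 2 / 4])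
    (i j : Fin 3) :
    (2 / 3) * (k₁ + k₂ + k₃) * (qv i - qv j)
      = (av i / 3 + (qv i) ^ 2) - (av j / 3 + (qv j) ^ 2) := by
  have hleg : ∀ l, (2 / 3) * (k₁ + k₂ + k₃) * qv l - (av l / 3 + qv l ^ 2)
      = (k₁ * k₂ + k₁ * k₃ + k₂ * k₃) / 3 := by
    subst hqv hav
    intro l
    fin_cases l <;> simp only [Fin.zero_eta, Fin.mk_one, Fin.reduceFinMk, Matrix.cons_val]
    · linear_combination ySoliton_leg_vertexVelocity_mul_sub_flux k₁ k₂ k₃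
    · linear_combination ySoliton_leg_vertexVelocity_mul_sub_flux k₁ k₃ k₂
    · linear_combination ySoliton_leg_vertexVelocity_mul_sub_flux k₂ k₃ k₁
  linear_combination hleg i - hleg j

/-- For all `k₁ < k₂ < k₃` and any two distinct legs `i ≠ j` of the Y soliton
(with parameters `q₁=(k₁+k₂)/2, q₂=(k₁+k₃)/2, q₃=(k₂+k₃)/2`,
`a₁=(k₂−k₁)²/4, a₂=(k₃−k₁)²/4, a₃=(k₃−k₂)²/4`), the ordinary Rankine–Hugoniot
jump condition for the conservation of waves equation `q_t + (a/3 + q²)_y = 0`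
holds with vertex velocity `s_y = (2/3)(k₁+k₂+k₃)`:
`s_y (q_i − q_j) = (a_i/3 + q_i²) − (a_j/3 + q_j²)`. -/
theorem y_soliton_conservation_of_waves_jump (k₁ k₂ k₃ : ℝ)
    (h12 : k₁ < k₂) (h23 : k₂ < k₃)
    (qv av : Fin 3 → ℝ)
    (hqv : qv = ![(k₁ + k₂) / 2, (k₁ + k₃) / 2, (k₂ + k₃) / 2])
    (hav : av = ![(k₂ - k₁) ^ 2 / 4, (k₃ - k₁) ^ 2 / 4, (k₃ - k₂) ^ 2 / 4])
    (i j : Fin 3) (hij : i ≠ j) :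
    (2 / 3) * (k₁ + k₂ + k₃) * (qv i - qv j)
      = (av i / 3 + (qv i) ^ 2) - (av j / 3 + (qv j) ^ 2) :=
  y_soliton_conservation_of_waves_jump_general k₁ k₂ k₃ qv av hqv hav i j
end

section
/- For all reals k₁ < k₂ < k₃ and every index j ∈ {1,2,3}, the Y soliton vertex moves along each of its three soliton lines: s_x + q_j s_y = a_j/3 + q_j². In particular, s_x = a₂/3 + q₂² − q₂ s_y. -/
/-- The vertex velocities are symmetric in the three parameters, so this single identity, for the
leg of the pair `k, l` with `m` the remaining parameter, covers all three legs after relabeling. -/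
lemma y_soliton_vertex_on_line_of_pair (k l m : ℝ) :
    -(1 / 3) * (k * l + k * m + l * m) + (k + l) / 2 * ((2 / 3) * (k + l + m))
      = (l - k) ^ 2 / 4 / 3 + ((k + l) / 2) ^ 2 := by
  ring

theorem y_soliton_vertex_on_each_line_general (k₁ k₂ k₃ : ℝ)
    (qv av : Fin 3 → ℝ)
    (hqv : qv = ![(k₁ + k₂) / 2, (k₁ + k₃) / 2, (k₂ + k₃) / 2])
    (hav : av = ![(k₂ - k₁) ^ 2 / 4, (k₃ - k₁) ^ 2 / 4, (k₃ - k₂) ^ 2 / 4]) :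
    (∀ j : Fin 3,
      -(1 / 3) * (k₁ * k₂ + k₁ * k₃ + k₂ * k₃) + qv j * ((2 / 3) * (k₁ + k₂ + k₃))
        = av j / 3 + (qv j) ^ 2)
    ∧ -(1 / 3) * (k₁ * k₂ + k₁ * k₃ + k₂ * k₃)
        = av 1 / 3 + (qv 1) ^ 2 - qv 1 * ((2 / 3) * (k₁ + k₂ + k₃)) := by
  rw [and_iff_left_of_imp fun on_line => eq_sub_of_add_eq (on_line 1)]
  subst hqv hav
  intro j
  fin_cases j <;> simp only [Fin.zero_eta, Fin.mk_one, Fin.reduceFinMk, Matrix.cons_val]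
  · exact y_soliton_vertex_on_line_of_pair k₁ k₂ k₃
  · linear_combination y_soliton_vertex_on_line_of_pair k₁ k₃ k₂
  · linear_combination y_soliton_vertex_on_line_of_pair k₂ k₃ k₁

/-- For all `k₁ < k₂ < k₃` and every leg `j` of the Y soliton
(with parameters `q₁=(k₁+k₂)/2, q₂=(k₁+k₃)/2, q₃=(k₂+k₃)/2`,
`a₁=(k₂−k₁)²/4, a₂=(k₃−k₁)²/4, a₃=(k₃−k₂)²/4`, indexed by `Fin 3` so that leg
`j+1` has index `j`), the vertex with velocity
`(s_x, s_y) = (−(1/3)(k₁k₂+k₁k₃+k₂k₃), (2/3)(k₁+k₂+k₃))` moves along each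
soliton line: `s_x + q_j s_y = a_j/3 + q_j²`.  In particular
`s_x = a₂/3 + q₂² − q₂ s_y`. -/
theorem y_soliton_vertex_on_each_line (k₁ k₂ k₃ : ℝ)
    (h12 : k₁ < k₂) (h23 : k₂ < k₃)
    (qv av : Fin 3 → ℝ)
    (hqv : qv = ![(k₁ + k₂) / 2, (k₁ + k₃) / 2, (k₂ + k₃) / 2])
    (hav : av = ![(k₂ - k₁) ^ 2 / 4, (k₃ - k₁) ^ 2 / 4, (k₃ - k₂) ^ 2 / 4]) :
    (∀ j : Fin 3,
      -(1 / 3) * (k₁ * k₂ + k₁ * k₃ + k₂ * k₃) + qv j * ((2 / 3) * (k₁ + k₂ + k₃))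
        = av j / 3 + (qv j) ^ 2)
    ∧ -(1 / 3) * (k₁ * k₂ + k₁ * k₃ + k₂ * k₃)
        = av 1 / 3 + (qv 1) ^ 2 - qv 1 * ((2 / 3) * (k₁ + k₂ + k₃)) :=
  y_soliton_vertex_on_each_line_general k₁ k₂ k₃ qv av hqv hav
end

section
/- There is no nontrivial shock connecting exactly two soliton states: if a₁ > 0, a₂ > 0 and q₁, q₂, s ∈ ℝ satisfy the three jump conditions s(q₂ − q₁) = (a₂/3 + q₂²) − (a₁/3 + q₁²), s(a₂^{3/2} − a₁^{3/2}) = 2q₂ a₂^{3/2} − 2q₁ a₁^{3/2}, and s(q₂ a₂^{3/2} − q₁ a₁^{3/2}) = ((2/15) a₂^{5/2} + 2q₂² a₂^{3/2}) − ((2/15) a₁^{5/2} + 2q₁² a₁^{3/2}), then a₁ = a₂ and q₁ = q₂. -/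
/-!
Write `A = √a₁`, `B = √a₂` and measure slopes relative to the shock, `vᵢ = qᵢ - s/2`. The jump
conditions become a conserved flux `m = v₁ A³ = v₂ B³` together with two relations quadratic in
the `vᵢ`. Substituting `vᵢ = m / Aᵢ³` into each of them gives two expressions for `m²`; equating
them leaves `(B - A)⁴` times a polynomial with positive coefficients, so `A = B`, and then the
flux forces `v₁ = v₂`.
-/

theorem shock_polynomial_eq {R : Type*} [CommRing R] (A B : R) :
    (B ^ 5 - A ^ 5) * (B ^ 6 - A ^ 6) - 5 * (B ^ 3 - A ^ 3) * (B ^ 2 - A ^ 2) * A ^ 3 * B ^ 3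
      = (B - A) ^ 4 * ((B ^ 2 + A * B + A ^ 2) * (B ^ 5 + 3 * A * B ^ 4 + 6 * A ^ 2 * B ^ 3
          + 6 * A ^ 3 * B ^ 2 + 3 * A ^ 4 * B + A ^ 5)) := by
  ring

section ReducedJump

variable {K : Type*} [Field K] [LinearOrder K] [IsStrictOrderedRing K] {A B v₁ v₂ : K}

theorem eq_of_shock_polynomial_eq_zero (hA : 0 < A) (hB : 0 < B)
    (h : (B ^ 5 - A ^ 5) * (B ^ 6 - A ^ 6)
      - 5 * (B ^ 3 - A ^ 3) * (B ^ 2 - A ^ 2) * A ^ 3 * B ^ 3 = 0) :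
    A = B := by
  rw [shock_polynomial_eq] at h
  have hpos : 0 < (B ^ 2 + A * B + A ^ 2) * (B ^ 5 + 3 * A * B ^ 4 + 6 * A ^ 2 * B ^ 3
      + 6 * A ^ 3 * B ^ 2 + 3 * A ^ 4 * B + A ^ 5) := by positivity
  have hBA : (B - A) ^ 4 = 0 := (mul_eq_zero.mp h).resolve_right hpos.ne'
  exact (sub_eq_zero.mp (pow_eq_zero_iff four_ne_zero |>.mp hBA)).symm

theorem eq_of_reduced_jump (hA : 0 < A) (hB : 0 < B)
    (hflux : v₂ * B ^ 3 = v₁ * A ^ 3)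
    (hwave : v₂ ^ 2 - v₁ ^ 2 = (A ^ 2 - B ^ 2) / 3)
    (hmomentum : (B ^ 5 - A ^ 5) / 15 + (v₂ ^ 2 * B ^ 3 - v₁ ^ 2 * A ^ 3) = 0) :
    A = B ∧ v₁ = v₂ := by
  set m := v₁ * A ^ 3 with hm
  have hm_wave : m ^ 2 * (B ^ 6 - A ^ 6) = (B ^ 2 - A ^ 2) * A ^ 6 * B ^ 6 / 3 := by
    linear_combination (-(A ^ 6 * B ^ 6)) * hwave + (A ^ 6 * (v₂ * B ^ 3 + m)) * hflux
  have hm_momentum : 15 * m ^ 2 * (B ^ 3 - A ^ 3) = (B ^ 5 - A ^ 5) * A ^ 3 * B ^ 3 := by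
    linear_combination (-15 * A ^ 3 * B ^ 3) * hmomentum + (15 * A ^ 3 * (v₂ * B ^ 3 + m)) * hflux
  have hpoly : A ^ 3 * B ^ 3 * ((B ^ 5 - A ^ 5) * (B ^ 6 - A ^ 6)
      - 5 * (B ^ 3 - A ^ 3) * (B ^ 2 - A ^ 2) * A ^ 3 * B ^ 3) = 0 := by
    linear_combination (15 * (B ^ 3 - A ^ 3)) * hm_wave - (B ^ 6 - A ^ 6) * hm_momentum
  have hAB : A = B := eq_of_shock_polynomial_eq_zero hA hB <|
    (mul_eq_zero.mp hpoly).resolve_left (by positivity)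
  subst hAB
  exact ⟨rfl, (mul_right_cancel₀ (pow_pos hA 3).ne' hflux).symm⟩

end ReducedJump

/-- No nontrivial shock connects exactly two soliton states: if `a₁, a₂ > 0` and
`q₁, q₂, s` satisfy the Rankine–Hugoniot jump conditions for the conservation of
waves equation `q_t + (a/3 + q²)_y = 0`, the wave action law
`(a^{3/2})_t + (2q a^{3/2})_y = 0`, and the `y`-momentum law
`(q a^{3/2})_t + ((2/15)a^{5/2} + 2q² a^{3/2})_y = 0`, then `a₁ = a₂` and
`q₁ = q₂`.  (Here `a^{3/2} = a·√a` and `a^{5/2} = a²·√a`.) -/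
theorem no_two_soliton_shock (a₁ a₂ q₁ q₂ s : ℝ) (ha₁ : 0 < a₁) (ha₂ : 0 < a₂)
    (h1 : s * (q₂ - q₁) = (a₂ / 3 + q₂ ^ 2) - (a₁ / 3 + q₁ ^ 2))
    (h2 : s * (a₂ * Real.sqrt a₂ - a₁ * Real.sqrt a₁)
        = 2 * q₂ * (a₂ * Real.sqrt a₂) - 2 * q₁ * (a₁ * Real.sqrt a₁))
    (h3 : s * (q₂ * (a₂ * Real.sqrt a₂) - q₁ * (a₁ * Real.sqrt a₁))
        = ((2 / 15) * (a₂ ^ 2 * Real.sqrt a₂) + 2 * q₂ ^ 2 * (a₂ * Real.sqrt a₂))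
          - ((2 / 15) * (a₁ ^ 2 * Real.sqrt a₁) + 2 * q₁ ^ 2 * (a₁ * Real.sqrt a₁))) :
    a₁ = a₂ ∧ q₁ = q₂ := by
  obtain ⟨A, hA, rfl⟩ : ∃ A : ℝ, 0 < A ∧ A ^ 2 = a₁ :=
    ⟨_, Real.sqrt_pos.mpr ha₁, Real.sq_sqrt ha₁.le⟩
  obtain ⟨B, hB, rfl⟩ : ∃ B : ℝ, 0 < B ∧ B ^ 2 = a₂ :=
    ⟨_, Real.sqrt_pos.mpr ha₂, Real.sq_sqrt ha₂.le⟩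
  rw [Real.sqrt_sq hA.le, Real.sqrt_sq hB.le] at h2 h3
  have hflux : (q₂ - s / 2) * B ^ 3 = (q₁ - s / 2) * A ^ 3 := by
    linear_combination (-1 / 2 : ℝ) * h2
  have hwave : (q₂ - s / 2) ^ 2 - (q₁ - s / 2) ^ 2 = (A ^ 2 - B ^ 2) / 3 := by
    linear_combination -h1
  have hmomentum : (B ^ 5 - A ^ 5) / 15
      + ((q₂ - s / 2) ^ 2 * B ^ 3 - (q₁ - s / 2) ^ 2 * A ^ 3) = 0 := by
    linear_combination (-1 / 2 : ℝ) * h3 - (s / 2) * hflux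
  obtain ⟨rfl, hv⟩ := eq_of_reduced_jump hA hB hflux hwave hmomentum
  exact ⟨rfl, by linarith⟩
end

section
/- Let U = I × J be an open rectangle with I ⊆ (0,∞) and J ⊆ (0,∞) nondegenerate open intervals. There is no continuously differentiable function ψ : U → ℝ that is nowhere zero on U and satisfies both 4a (∂ψ/∂a)² = (∂ψ/∂q)² and ψ + 2q (∂ψ/∂q) = 0 at every point (a,q) ∈ U. -/
/-!
From `ψ + 2q ψ_q = 0` the quantity `q ψ²` does not depend on `q`, and hence neither does its
`a`-derivative `2 q ψ ψ_a`. Eliminating `ψ_q` from the first equation gives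
`ψ² = 16 a q² ψ_a²`, so `ψ⁴ = 16 a (q ψ ψ_a)²` is independent of `q` as well. Comparing with
`q² ψ⁴ = (q ψ²)²` at two heights `q₀ < q₁` forces `ψ = 0`.
-/

open Set Filter Topology

theorem IsOpen.mul_sq_eq_of_add_two_mul_deriv_eq_zero {f : ℝ → ℝ} {s : Set ℝ}
    (hs : IsOpen s) (hs' : IsPreconnected s) (hf : DifferentiableOn ℝ f s)
    (hode : ∀ q ∈ s, f q + 2 * q * deriv f q = 0) {x y : ℝ} (hx : x ∈ s) (hy : y ∈ s) :
    x * f x ^ 2 = y * f y ^ 2 := by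
  refine hs.is_const_of_deriv_eq_zero (f := fun q => q * f q ^ 2) hs' (fun q hq => ?_) (fun q hq => ?_) hx hy
  · have := hf q hq
    fun_prop
  · have hfq : DifferentiableAt ℝ f q := hf.differentiableAt (hs.mem_nhds hq)
    have hderiv := (hasDerivAt_id' q).fun_mul (hfq.hasDerivAt.fun_pow 2)
    rw [Pi.zero_apply, hderiv.deriv]
    linear_combination f q * hode q hq

theorem mul_deriv_eq_of_eventuallyEq_mul_sq {f g : ℝ → ℝ} {a c d : ℝ}
    (hf : DifferentiableAt ℝ f a) (hg : DifferentiableAt ℝ g a)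
    (hfg : (fun x => c * f x ^ 2) =ᶠ[𝓝 a] fun x => d * g x ^ 2) :
    c * f a * deriv f a = d * g a * deriv g a := by
  have hf' := (hf.hasDerivAt.fun_pow 2).const_mul c
  have hg' := (hg.hasDerivAt.fun_pow 2).const_mul d
  have := hf'.unique (hg'.congr_of_eventuallyEq hfg)
  linear_combination this / 2

theorem eq_zero_of_modulation_eqs {a q₀ q₁ ψ₀ ψ₁ A₀ A₁ B₀ B₁ : ℝ} (hq : q₀ ^ 2 ≠ q₁ ^ 2)
    (hAB₀ : 4 * a * A₀ ^ 2 = B₀ ^ 2) (hAB₁ : 4 * a * A₁ ^ 2 = B₁ ^ 2)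
    (hψB₀ : ψ₀ + 2 * q₀ * B₀ = 0) (hψB₁ : ψ₁ + 2 * q₁ * B₁ = 0)
    (hψ : q₀ * ψ₀ ^ 2 = q₁ * ψ₁ ^ 2) (hA : q₀ * ψ₀ * A₀ = q₁ * ψ₁ * A₁) :
    ψ₀ = 0 := by
  have hsq₀ : ψ₀ ^ 2 = 16 * a * q₀ ^ 2 * A₀ ^ 2 := by
    linear_combination (ψ₀ - 2 * q₀ * B₀) * hψB₀ - 4 * q₀ ^ 2 * hAB₀
  have hsq₁ : ψ₁ ^ 2 = 16 * a * q₁ ^ 2 * A₁ ^ 2 := by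
    linear_combination (ψ₁ - 2 * q₁ * B₁) * hψB₁ - 4 * q₁ ^ 2 * hAB₁
  have hfourth : ψ₀ ^ 4 = ψ₁ ^ 4 := by
    linear_combination ψ₀ ^ 2 * hsq₀ - ψ₁ ^ 2 * hsq₁
      + 16 * a * (q₀ * ψ₀ * A₀ + q₁ * ψ₁ * A₁) * hA
  have : (q₀ ^ 2 - q₁ ^ 2) * ψ₀ ^ 4 = 0 := by
    linear_combination (q₀ * ψ₀ ^ 2 + q₁ * ψ₁ ^ 2) * hψ - q₁ ^ 2 * hfourth
  exact pow_eq_zero_iff (n := 4) (by norm_num) |>.mp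
    ((mul_eq_zero.mp this).resolve_left (sub_ne_zero.mpr hq))

theorem no_common_singular_psi_general (p₁ p₂ r₁ r₂ : ℝ)
    (hp : p₁ < p₂) (hr : r₁ < r₂) (hr0 : 0 < r₁) :
    ¬ ∃ ψ : ℝ × ℝ → ℝ,
      ContDiffOn ℝ 1 ψ (Set.Ioo p₁ p₂ ×ˢ Set.Ioo r₁ r₂) ∧
      (∀ z ∈ Set.Ioo p₁ p₂ ×ˢ Set.Ioo r₁ r₂, ψ z ≠ 0) ∧
      (∀ a ∈ Set.Ioo p₁ p₂, ∀ q ∈ Set.Ioo r₁ r₂,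
        4 * a * (deriv (fun a' => ψ (a', q)) a) ^ 2
            = (deriv (fun q' => ψ (a, q')) q) ^ 2
        ∧ ψ (a, q) + 2 * q * deriv (fun q' => ψ (a, q')) q = 0) := by
  rintro ⟨ψ, hC, hne, heq⟩
  have hdiff : ∀ z ∈ Ioo p₁ p₂ ×ˢ Ioo r₁ r₂, DifferentiableAt ℝ ψ z := fun z hz =>
    (hC.differentiableOn one_ne_zero).differentiableAt ((isOpen_Ioo.prod isOpen_Ioo).mem_nhds hz)
  obtain ⟨a, ha⟩ : ∃ a, a ∈ Ioo p₁ p₂ := exists_between hp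
  obtain ⟨q₀, hr₁q₀, hq₀r₂⟩ := exists_between hr
  obtain ⟨q₁, hq₀q₁, hq₁r₂⟩ := exists_between hq₀r₂
  have hq₀ : q₀ ∈ Ioo r₁ r₂ := ⟨hr₁q₀, hq₀r₂⟩
  have hq₁ : q₁ ∈ Ioo r₁ r₂ := ⟨hr₁q₀.trans hq₀q₁, hq₁r₂⟩
  have hψ : ∀ a' ∈ Ioo p₁ p₂, q₀ * ψ (a', q₀) ^ 2 = q₁ * ψ (a', q₁) ^ 2 := fun a' ha' =>
    isOpen_Ioo.mul_sq_eq_of_add_two_mul_deriv_eq_zero isPreconnected_Ioo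
      (fun q hq => (hdiff _ ⟨ha', hq⟩).comp q (by fun_prop) |>.differentiableWithinAt)
      (fun q hq => (heq a' ha' q hq).2) hq₀ hq₁
  have hA := mul_deriv_eq_of_eventuallyEq_mul_sq
    ((hdiff _ ⟨ha, hq₀⟩).comp a (by fun_prop)) ((hdiff _ ⟨ha, hq₁⟩).comp a (by fun_prop))
    (eventually_of_mem (isOpen_Ioo.mem_nhds ha) hψ)
  refine hne _ ⟨ha, hq₀⟩ (eq_zero_of_modulation_eqs ?_ (heq a ha q₀ hq₀).1 (heq a ha q₁ hq₁).1
    (heq a ha q₀ hq₀).2 (heq a ha q₁ hq₁).2 (hψ a ha) hA)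
  exact (pow_lt_pow_left₀ hq₀q₁ (hr0.trans hr₁q₀).le two_ne_zero).ne

/-- Let `U = I × J` be an open rectangle with `I = (p₁,p₂) ⊆ (0,∞)` and
`J = (r₁,r₂) ⊆ (0,∞)` nondegenerate open intervals.  There is no continuously
differentiable function `ψ : U → ℝ` that is nowhere zero on `U` and satisfies
both `4a (∂ψ/∂a)² = (∂ψ/∂q)²` and `ψ + 2q (∂ψ/∂q) = 0` at every `(a,q) ∈ U`. -/
theorem no_common_singular_psi (p₁ p₂ r₁ r₂ : ℝ)
    (hp : p₁ < p₂) (hr : r₁ < r₂) (hp0 : 0 < p₁) (hr0 : 0 < r₁) :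
    ¬ ∃ ψ : ℝ × ℝ → ℝ,
      ContDiffOn ℝ 1 ψ (Set.Ioo p₁ p₂ ×ˢ Set.Ioo r₁ r₂) ∧
      (∀ z ∈ Set.Ioo p₁ p₂ ×ˢ Set.Ioo r₁ r₂, ψ z ≠ 0) ∧
      (∀ a ∈ Set.Ioo p₁ p₂, ∀ q ∈ Set.Ioo r₁ r₂,
        4 * a * (deriv (fun a' => ψ (a', q)) a) ^ 2
            = (deriv (fun q' => ψ (a, q')) q) ^ 2
        ∧ ψ (a, q) + 2 * q * deriv (fun q' => ψ (a, q')) q = 0) :=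
  no_common_singular_psi_general p₁ p₂ r₁ r₂ hp hr hr0
end

section
/- Riemann invariant diagonalization of the modulation system: let a, q : ℝ² → ℝ be differentiable functions of (y,t) with a > 0 everywhere, satisfying the KP soliton modulation system at every point. Then the Riemann invariants R₊ = q + √a and R₋ = q − √a satisfy ∂_t R₊ + (2q + (2/3)√a) ∂_y R₊ = 0 and ∂_t R₋ + (2q − (2/3)√a) ∂_y R₋ = 0 at every point; i.e., R_± are transported at the characteristic velocities V_± = (4/3)R_± + (2/3)R_∓. -/
/-!
Writing `s = √a` and `R = q + σ s` with `σ = ±1`, one has `R' = q' + σ a' / (2 s)` in either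
variable, and expanding `R_t + (2q + (2/3) σ s) R_y` shows it equals the second equation of the
system plus `σ / (2 s)` times the first (using `σ² = 1` and `s² = a`); hence it vanishes.
-/

open Real

theorem HasDerivAt.add_const_mul_sqrt {f g : ℝ → ℝ} {f' g' x : ℝ} (σ : ℝ)
    (hf : HasDerivAt f f' x) (hg : HasDerivAt g g' x) (hgx : g x ≠ 0) :
    HasDerivAt (fun x => f x + σ * √(g x)) (f' + σ * (g' / (2 * √(g x)))) x :=
  hf.add ((hg.sqrt hgx).const_mul σ)

theorem riemann_transport_identity {σ s q aY aT qY qT : ℝ} (hσ : σ ^ 2 = 1) (hs : s ≠ 0) :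
    (qT + σ * (aT / (2 * s))) + (2 * q + σ * (2 / 3) * s) * (qY + σ * (aY / (2 * s))) =
      (qT + 1 / 3 * aY + 2 * q * qY) + σ / (2 * s) * (aT + 2 * q * aY + 4 / 3 * s ^ 2 * qY) := by
  field_simp
  linear_combination (2 * s * aY) * hσ

theorem riemann_invariant_transport (σ : ℝ) (hσ : σ ^ 2 = 1) {a q : ℝ → ℝ → ℝ}
    {aY aT qY qT y t : ℝ} (hpos : 0 < a y t)
    (haY : HasDerivAt (fun y' => a y' t) aY y) (haT : HasDerivAt (fun t' => a y t') aT t)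
    (hqY : HasDerivAt (fun y' => q y' t) qY y) (hqT : HasDerivAt (fun t' => q y t') qT t)
    (heq1 : aT + 2 * q y t * aY + (4 / 3) * a y t * qY = 0)
    (heq2 : qT + (1 / 3) * aY + 2 * q y t * qY = 0) :
    deriv (fun t' => q y t' + σ * √(a y t')) t
        + (2 * q y t + σ * (2 / 3) * √(a y t)) * deriv (fun y' => q y' t + σ * √(a y' t)) y = 0 := by
  have hs : √(a y t) ≠ 0 := (sqrt_pos.mpr hpos).ne'
  rw [(hqT.add_const_mul_sqrt σ haT hpos.ne').deriv, (hqY.add_const_mul_sqrt σ haY hpos.ne').deriv,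
    riemann_transport_identity hσ hs, sq_sqrt hpos.le, heq1, heq2]
  ring

/-- Riemann invariant diagonalization: if `a > 0` and `q` are differentiable
solutions of the KP soliton modulation system `a_t + 2q a_y + (4/3)a q_y = 0`,
`q_t + (1/3)a_y + 2q q_y = 0`, then the Riemann invariants `R± = q ± √a`
satisfy `∂_t R± + (2q ± (2/3)√a) ∂_y R± = 0` at every point. -/
theorem riemann_invariant_diagonalization (a q aY aT qY qT : ℝ → ℝ → ℝ)
    (hpos : ∀ y t, 0 < a y t)
    (haY : ∀ y t, HasDerivAt (fun y' => a y' t) (aY y t) y)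
    (haT : ∀ y t, HasDerivAt (fun t' => a y t') (aT y t) t)
    (hqY : ∀ y t, HasDerivAt (fun y' => q y' t) (qY y t) y)
    (hqT : ∀ y t, HasDerivAt (fun t' => q y t') (qT y t) t)
    (heq1 : ∀ y t, aT y t + 2 * q y t * aY y t + (4 / 3) * a y t * qY y t = 0)
    (heq2 : ∀ y t, qT y t + (1 / 3) * aY y t + 2 * q y t * qY y t = 0) :
    ∀ y t,
      (deriv (fun t' => q y t' + Real.sqrt (a y t')) t
          + (2 * q y t + (2 / 3) * Real.sqrt (a y t)) *
              deriv (fun y' => q y' t + Real.sqrt (a y' t)) y = 0)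
      ∧ (deriv (fun t' => q y t' - Real.sqrt (a y t')) t
          + (2 * q y t - (2 / 3) * Real.sqrt (a y t)) *
              deriv (fun y' => q y' t - Real.sqrt (a y' t)) y = 0) := by
  intro y t
  have transport (σ : ℝ) (hσ : σ ^ 2 = 1) := riemann_invariant_transport σ hσ (hpos y t)
    (haY y t) (haT y t) (hqY y t) (hqT y t) (heq1 y t) (heq2 y t)
  constructor
  · simpa only [one_mul] using transport 1 (one_pow 2)
  · simpa only [neg_mul, one_mul, ← sub_eq_add_neg] using transport (-1) (by norm_num)
end

section
/- The partial-soliton simple wave solves the modulation system: let a_n > 0, q_n ∈ ℝ, set q_* = q_n + √(a_n), and define on the region D = {(y,t) : t > 0 and (2q_n − (2/3)√(a_n)) t < y < 2 q_* t} the functions a(y,t) = (9/64)(2q_* − y/t)² and q(y,t) = q_* − (3/8)(2q_* − y/t). Then a > 0 on D and (a,q) satisfies the KP soliton modulation system at every point of D. -/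
/-!
Along the fan the self-similar variable `ξ = y / t` equals the characteristic speed
`2q − (2/3)√a`, while `q + √a = q_*` stays constant. For fields of the form `A (y / t)`,
`Q (y / t)` the modulation system reduces to two ODEs in `ξ`, and with `s = 2q_* − ξ` the
profiles `A = (9/64) s²`, `Q = q_* − (3/8) s` satisfy them identically.
-/

def SolvesKPModulationAt (a q : ℝ → ℝ → ℝ) (y t : ℝ) : Prop :=
  deriv (fun t' => a y t') t + 2 * q y t * deriv (fun y' => a y' t) y
      + 4 / 3 * a y t * deriv (fun y' => q y' t) y = 0 ∧
    deriv (fun t' => q y t') t + 1 / 3 * deriv (fun y' => a y' t) y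
      + 2 * q y t * deriv (fun y' => q y' t) y = 0

section SelfSimilar

variable {f : ℝ → ℝ} {f' y t : ℝ}

theorem hasDerivAt_comp_div_right (hf : HasDerivAt f f' (y / t)) :
    HasDerivAt (fun y' => f (y' / t)) (f' / t) y :=
  (hf.comp y ((hasDerivAt_id' y).div_const t)).congr_deriv (by ring)

theorem hasDerivAt_comp_div_left (ht : t ≠ 0) (hf : HasDerivAt f f' (y / t)) :
    HasDerivAt (fun t' => f (y / t')) (-(y / t) / t * f') t := by
  have hξ : HasDerivAt (fun t' => y / t') (-(y / t) / t) t := by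
    simpa [div_eq_mul_inv, pow_two, mul_assoc] using (hasDerivAt_inv ht).const_mul y
  exact (hf.comp t hξ).congr_deriv (mul_comm _ _)

theorem solvesKPModulationAt_of_selfSimilar {A Q : ℝ → ℝ} {A' Q' : ℝ} (ht : t ≠ 0)
    (hA : HasDerivAt A A' (y / t)) (hQ : HasDerivAt Q Q' (y / t))
    (hode₁ : (2 * Q (y / t) - y / t) * A' + 4 / 3 * A (y / t) * Q' = 0)
    (hode₂ : (2 * Q (y / t) - y / t) * Q' + 1 / 3 * A' = 0) :
    SolvesKPModulationAt (fun y t => A (y / t)) (fun y t => Q (y / t)) y t := by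
  have hAy := (hasDerivAt_comp_div_right hA).deriv
  have hQy := (hasDerivAt_comp_div_right hQ).deriv
  constructor
  · rw [(hasDerivAt_comp_div_left ht hA).deriv, hAy, hQy]
    linear_combination t⁻¹ * hode₁
  · rw [(hasDerivAt_comp_div_left ht hQ).deriv, hAy, hQy]
    linear_combination t⁻¹ * hode₂

end SelfSimilar

section SimpleWave

variable (qStar : ℝ)

/-- `qStar` is the constant value `q_n + √a_n` of the Riemann invariant `q + √a`. -/
noncomputable def simpleWaveA (ξ : ℝ) : ℝ := 9 / 64 * (2 * qStar - ξ) ^ 2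

noncomputable def simpleWaveQ (ξ : ℝ) : ℝ := qStar - 3 / 8 * (2 * qStar - ξ)

theorem hasDerivAt_simpleWaveA (ξ : ℝ) :
    HasDerivAt (simpleWaveA qStar) (-(9 / 32) * (2 * qStar - ξ)) ξ := by
  have h := (((hasDerivAt_id' ξ).const_sub (2 * qStar)).pow 2).const_mul (9 / 64 : ℝ)
  exact h.congr_deriv (by ring)

theorem hasDerivAt_simpleWaveQ (ξ : ℝ) : HasDerivAt (simpleWaveQ qStar) (3 / 8) ξ := by
  have h := (((hasDerivAt_id' ξ).const_sub (2 * qStar)).const_mul (3 / 8 : ℝ)).const_sub qStar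
  exact h.congr_deriv (by ring)

theorem solvesKPModulationAt_simpleWave {y t : ℝ} (ht : t ≠ 0) :
    SolvesKPModulationAt (fun y t => simpleWaveA qStar (y / t))
      (fun y t => simpleWaveQ qStar (y / t)) y t :=
  solvesKPModulationAt_of_selfSimilar ht (hasDerivAt_simpleWaveA qStar _)
    (hasDerivAt_simpleWaveQ qStar _) (by unfold simpleWaveA simpleWaveQ; ring)
    (by unfold simpleWaveQ; ring)

end SimpleWave

theorem partial_soliton_simple_wave_general (an qn : ℝ) (y t : ℝ)
    (ht : 0 < t)
    (hy2 : y < 2 * (qn + Real.sqrt an) * t) :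
    (0 < (9 / 64) * (2 * (qn + Real.sqrt an) - y / t) ^ 2)
    ∧ (deriv (fun t' => (9 / 64) * (2 * (qn + Real.sqrt an) - y / t') ^ 2) t
        + 2 * ((qn + Real.sqrt an) - (3 / 8) * (2 * (qn + Real.sqrt an) - y / t)) *
            deriv (fun y' => (9 / 64) * (2 * (qn + Real.sqrt an) - y' / t) ^ 2) y
        + (4 / 3) * ((9 / 64) * (2 * (qn + Real.sqrt an) - y / t) ^ 2) *
            deriv (fun y' => (qn + Real.sqrt an)
              - (3 / 8) * (2 * (qn + Real.sqrt an) - y' / t)) y = 0)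
    ∧ (deriv (fun t' => (qn + Real.sqrt an)
          - (3 / 8) * (2 * (qn + Real.sqrt an) - y / t')) t
        + (1 / 3) * deriv (fun y' => (9 / 64) * (2 * (qn + Real.sqrt an) - y' / t) ^ 2) y
        + 2 * ((qn + Real.sqrt an) - (3 / 8) * (2 * (qn + Real.sqrt an) - y / t)) *
            deriv (fun y' => (qn + Real.sqrt an)
              - (3 / 8) * (2 * (qn + Real.sqrt an) - y' / t)) y = 0) := by
  have hξ : 0 < 2 * (qn + Real.sqrt an) - y / t := by
    rw [sub_pos, div_lt_iff₀ ht]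
    exact hy2
  exact ⟨by positivity, solvesKPModulationAt_simpleWave (qn + Real.sqrt an) ht.ne'⟩

/-- The partial-soliton simple wave solves the KP soliton modulation system:
let `a_n > 0`, `q_* = q_n + √a_n`, and on the region
`D = {(y,t) : t > 0, (2q_n − (2/3)√a_n) t < y < 2q_* t}` define
`a(y,t) = (9/64)(2q_* − y/t)²` and `q(y,t) = q_* − (3/8)(2q_* − y/t)`.
Then `a > 0` on `D` and `(a,q)` satisfies `a_t + 2q a_y + (4/3)a q_y = 0` and
`q_t + (1/3)a_y + 2q q_y = 0` at every point of `D`. -/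
theorem partial_soliton_simple_wave (an qn : ℝ) (han : 0 < an) (y t : ℝ)
    (ht : 0 < t)
    (hy1 : (2 * qn - (2 / 3) * Real.sqrt an) * t < y)
    (hy2 : y < 2 * (qn + Real.sqrt an) * t) :
    (0 < (9 / 64) * (2 * (qn + Real.sqrt an) - y / t) ^ 2)
    ∧ (deriv (fun t' => (9 / 64) * (2 * (qn + Real.sqrt an) - y / t') ^ 2) t
        + 2 * ((qn + Real.sqrt an) - (3 / 8) * (2 * (qn + Real.sqrt an) - y / t)) *
            deriv (fun y' => (9 / 64) * (2 * (qn + Real.sqrt an) - y' / t) ^ 2) y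
        + (4 / 3) * ((9 / 64) * (2 * (qn + Real.sqrt an) - y / t) ^ 2) *
            deriv (fun y' => (qn + Real.sqrt an)
              - (3 / 8) * (2 * (qn + Real.sqrt an) - y' / t)) y = 0)
    ∧ (deriv (fun t' => (qn + Real.sqrt an)
          - (3 / 8) * (2 * (qn + Real.sqrt an) - y / t')) t
        + (1 / 3) * deriv (fun y' => (9 / 64) * (2 * (qn + Real.sqrt an) - y' / t) ^ 2) y
        + 2 * ((qn + Real.sqrt an) - (3 / 8) * (2 * (qn + Real.sqrt an) - y / t)) *
            deriv (fun y' => (qn + Real.sqrt an)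
              - (3 / 8) * (2 * (qn + Real.sqrt an) - y' / t)) y = 0) :=
  partial_soliton_simple_wave_general an qn y t ht hy2
end

section
/- Two-exponential tau function yields the line soliton: let ε > 0 and k₋ < k₊ be reals, and define θ_±(x,y,t) = (1/(√12 ε))(k_± x + (k_±²/2) y − (k_±³/3) t). Then for all (x,y,t), 12 ε² ∂²/∂x² [ log( e^{θ₋(x,y,t)} + e^{θ₊(x,y,t)} ) ] = a·sech²( √(a/12)·(x + q y − c t)/ε ), where a = (k₊ − k₋)²/4, q = (k₊ + k₋)/2, and c = a/3 + q². -/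
/-!
Since `e^u + e^v = 2 e^{(u+v)/2} cosh ((v-u)/2)`, the logarithm of the tau function is an affine
function of `x` plus `log cosh` of half the phase difference, which is itself affine in `x`;
and `(log cosh)'' = tanh' = sech²`. The half phase difference is `√(a/12) (x + q y - c t) / ε` up
to sign, the sign being invisible to `cosh`.
-/

open Real

theorem Real.exp_add_exp (u v : ℝ) :
    exp u + exp v = 2 * exp ((u + v) / 2) * cosh ((v - u) / 2) := by
  calc exp u + exp v = exp ((u + v) / 2 + -((v - u) / 2)) + exp ((u + v) / 2 + (v - u) / 2) := by
        ring_nf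
    _ = 2 * exp ((u + v) / 2) * cosh ((v - u) / 2) := by
        rw [exp_add, exp_add, cosh_eq]; ring

theorem Real.log_exp_add_exp (u v : ℝ) :
    log (exp u + exp v) = (u + v) / 2 + log 2 + log (cosh ((v - u) / 2)) := by
  rw [exp_add_exp, log_mul (by positivity) (cosh_pos _).ne', log_mul two_ne_zero (exp_pos _).ne',
    log_exp]
  ring

theorem Real.hasDerivAt_log_cosh (x : ℝ) :
    HasDerivAt (fun x => log (cosh x)) (tanh x) x := by
  simpa [tanh_eq_sinh_div_cosh] using (hasDerivAt_cosh x).log (cosh_pos x).ne'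

theorem Real.hasDerivAt_tanh (x : ℝ) : HasDerivAt tanh (1 / cosh x ^ 2) x := by
  have h := (hasDerivAt_sinh x).div (hasDerivAt_cosh x) (cosh_pos x).ne'
  rw [← sq, ← sq, cosh_sq_sub_sinh_sq] at h
  rwa [show tanh = sinh / cosh from funext tanh_eq_sinh_div_cosh]

theorem iteratedDeriv_two_log_exp_add_exp (α β γ δ x : ℝ) :
    iteratedDeriv 2 (fun x => log (exp (α * x + β) + exp (γ * x + δ))) x
      = ((γ - α) / 2) ^ 2 / cosh ((γ - α) / 2 * x + (δ - β) / 2) ^ 2 := by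
  have hlog : (fun x => log (exp (α * x + β) + exp (γ * x + δ))) = fun x =>
      (α + γ) / 2 * x + ((β + δ) / 2 + log 2) + log (cosh ((γ - α) / 2 * x + (δ - β) / 2)) := by
    funext x
    rw [log_exp_add_exp]
    ring_nf
  set A := (γ - α) / 2
  set B := (δ - β) / 2
  have hlin (x : ℝ) : HasDerivAt (fun x => A * x + B) A x := by
    simpa using ((hasDerivAt_id x).const_mul A).add_const B
  have hderiv : deriv (fun x => log (exp (α * x + β) + exp (γ * x + δ)))
      = fun x => (α + γ) / 2 + A * tanh (A * x + B) := by
    funext x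
    rw [hlog]
    refine HasDerivAt.deriv ?_
    have := ((hasDerivAt_id x).const_mul ((α + γ) / 2)).add_const ((β + δ) / 2 + log 2) |>.add
      ((hasDerivAt_log_cosh (A * x + B)).comp x (hlin x))
    exact this.congr_deriv (by ring)
  rw [iteratedDeriv_succ, iteratedDeriv_one, hderiv]
  refine HasDerivAt.deriv ?_
  exact ((((hasDerivAt_tanh _).comp x (hlin x)).const_mul A).const_add ((α + γ) / 2)).congr_deriv
    (by ring)

theorem Real.cosh_abs_mul (a w : ℝ) : cosh (|a| * w) = cosh (a * w) := by
  rcases abs_cases a with ⟨ha, -⟩ | ⟨ha, -⟩ <;> simp [ha]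

theorem tau_function_line_soliton_general (ε km kp : ℝ) (hε : 0 < ε)
    (x y t : ℝ) :
    12 * ε ^ 2 *
      iteratedDeriv 2 (fun x' =>
        Real.log
          (Real.exp ((1 / (Real.sqrt 12 * ε)) *
              (km * x' + (km ^ 2 / 2) * y - (km ^ 3 / 3) * t))
            + Real.exp ((1 / (Real.sqrt 12 * ε)) *
              (kp * x' + (kp ^ 2 / 2) * y - (kp ^ 3 / 3) * t)))) x
    = ((kp - km) ^ 2 / 4) *
        (1 / Real.cosh (Real.sqrt (((kp - km) ^ 2 / 4) / 12) *
          (x + ((kp + km) / 2) * y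
            - (((kp - km) ^ 2 / 4) / 3 + ((kp + km) / 2) ^ 2) * t) / ε)) ^ 2 := by
  set X := x + (kp + km) / 2 * y - ((kp - km) ^ 2 / 4 / 3 + ((kp + km) / 2) ^ 2) * t
  have hr : √12 ^ 2 = 12 := sq_sqrt (by norm_num)
  have hphase (k x' : ℝ) : 1 / (√12 * ε) * (k * x' + k ^ 2 / 2 * y - k ^ 3 / 3 * t)
      = k / (√12 * ε) * x' + (k ^ 2 / 2 * y - k ^ 3 / 3 * t) / (√12 * ε) := by ring
  have harg : (kp / (√12 * ε) - km / (√12 * ε)) / 2 * x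
      + ((kp ^ 2 / 2 * y - kp ^ 3 / 3 * t) / (√12 * ε)
        - (km ^ 2 / 2 * y - km ^ 3 / 3 * t) / (√12 * ε)) / 2
      = (kp - km) * (X / (2 * √12 * ε)) := by
    -- the speed `c = a/3 + q²` is `(kp³ - km³) / (3 (kp - km))`
    field_simp; ring
  have hwidth : √((kp - km) ^ 2 / 4 / 12) * X / ε = |kp - km| * (X / (2 * √12 * ε)) := by
    rw [show (kp - km) ^ 2 / 4 / 12 = ((kp - km) / (2 * √12)) ^ 2 by field_simp; rw [hr]; ring,
      sqrt_sq_eq_abs, abs_div, abs_of_pos (by positivity : 0 < 2 * √12)]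
    ring
  simp only [hphase, iteratedDeriv_two_log_exp_add_exp]
  rw [harg, hwidth, cosh_abs_mul]
  field_simp
  rw [hr]
  ring

/-- Two-exponential tau function yields the line soliton: for `ε > 0`,
`k₋ < k₊`, with phases `θ_±(x,y,t) = (1/(√12 ε))(k_± x + (k_±²/2)y − (k_±³/3)t)`,
one has `12 ε² ∂²ₓ log(e^{θ₋} + e^{θ₊}) = a sech²(√(a/12)(x + qy − ct)/ε)` where
`a = (k₊−k₋)²/4`, `q = (k₊+k₋)/2` and `c = a/3 + q²`. -/
theorem tau_function_line_soliton (ε km kp : ℝ) (hε : 0 < ε) (hk : km < kp)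
    (x y t : ℝ) :
    12 * ε ^ 2 *
      iteratedDeriv 2 (fun x' =>
        Real.log
          (Real.exp ((1 / (Real.sqrt 12 * ε)) *
              (km * x' + (km ^ 2 / 2) * y - (km ^ 3 / 3) * t))
            + Real.exp ((1 / (Real.sqrt 12 * ε)) *
              (kp * x' + (kp ^ 2 / 2) * y - (kp ^ 3 / 3) * t)))) x
    = ((kp - km) ^ 2 / 4) *
        (1 / Real.cosh (Real.sqrt (((kp - km) ^ 2 / 4) / 12) *
          (x + ((kp + km) / 2) * y
            - (((kp - km) ^ 2 / 4) / 3 + ((kp + km) / 2) ^ 2) * t) / ε)) ^ 2 :=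
  tau_function_line_soliton_general ε km kp hε x y t
end

section
/- Shock-type classification of the Y soliton jumps: for all reals k₁ < k₂ < k₃, the Y soliton parameters satisfy (i) q₂ + √(a₂) = q₃ + √(a₃) = k₃ and 2q₂ − (2/3)√(a₂) < 2q₃ − (2/3)√(a₃), so the jump between legs 2 and 3 conserves the Riemann invariant R₊ = q + √a and is compressive in the slow characteristic family; and (ii) q₁ − √(a₁) = q₂ − √(a₂) = k₁ and 2q₁ + (2/3)√(a₁) < 2q₂ + (2/3)√(a₂), so the jump between legs 1 and 2 conserves the Riemann invariant R₋ = q − √a and is expansive in the fast characteristic family. -/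
/-! On a leg with wavenumbers `k ≤ l` one has `√a = (l - k) / 2`, so `R₊ = l`, `R₋ = k`,
`V₋ = (4k + 2l) / 3` and `V₊ = (2k + 4l) / 3`. Adjacent legs share one wavenumber, so the
shared Riemann invariant is conserved and the speed inequalities reduce to `k₁ < k₂` and
`k₂ < k₃`. -/

theorem Real.sqrt_sq_sub_div_four_of_le {k l : ℝ} (h : k ≤ l) :
    Real.sqrt ((l - k) ^ 2 / 4) = (l - k) / 2 := by
  rw [show (l - k) ^ 2 / 4 = ((l - k) / 2) ^ 2 by ring, Real.sqrt_sq (by linarith)]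

/-- Shock-type classification of the Y soliton jumps: for `k₁ < k₂ < k₃`, with
Y soliton parameters `q₁=(k₁+k₂)/2, q₂=(k₁+k₃)/2, q₃=(k₂+k₃)/2`,
`a₁=(k₂−k₁)²/4, a₂=(k₃−k₁)²/4, a₃=(k₃−k₂)²/4`:
(i) `q₂+√a₂ = q₃+√a₃ = k₃` and `2q₂−(2/3)√a₂ < 2q₃−(2/3)√a₃` (the jump between
legs 2 and 3 conserves `R₊ = q+√a` and is compressive in the slow family);
(ii) `q₁−√a₁ = q₂−√a₂ = k₁` and `2q₁+(2/3)√a₁ < 2q₂+(2/3)√a₂` (the jump between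
legs 1 and 2 conserves `R₋ = q−√a` and is expansive in the fast family). -/
theorem y_soliton_shock_classification (k₁ k₂ k₃ : ℝ)
    (h12 : k₁ < k₂) (h23 : k₂ < k₃) :
    ((k₁ + k₃) / 2 + Real.sqrt ((k₃ - k₁) ^ 2 / 4) = k₃
      ∧ (k₂ + k₃) / 2 + Real.sqrt ((k₃ - k₂) ^ 2 / 4) = k₃
      ∧ 2 * ((k₁ + k₃) / 2) - (2 / 3) * Real.sqrt ((k₃ - k₁) ^ 2 / 4)
          < 2 * ((k₂ + k₃) / 2) - (2 / 3) * Real.sqrt ((k₃ - k₂) ^ 2 / 4))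
    ∧ ((k₁ + k₂) / 2 - Real.sqrt ((k₂ - k₁) ^ 2 / 4) = k₁
      ∧ (k₁ + k₃) / 2 - Real.sqrt ((k₃ - k₁) ^ 2 / 4) = k₁
      ∧ 2 * ((k₁ + k₂) / 2) + (2 / 3) * Real.sqrt ((k₂ - k₁) ^ 2 / 4)
          < 2 * ((k₁ + k₃) / 2) + (2 / 3) * Real.sqrt ((k₃ - k₁) ^ 2 / 4)) := by
  rw [Real.sqrt_sq_sub_div_four_of_le h12.le, Real.sqrt_sq_sub_div_four_of_le h23.le,
    Real.sqrt_sq_sub_div_four_of_le (h12.trans h23).le]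
  exact ⟨⟨by ring, by ring, by linarith⟩, ⟨by ring, by ring, by linarith⟩⟩
end
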